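/- Let A be a Banach algebra with a left approximate identity and φ a non-zero multiplicative linear functional on A. If A is left φ-biflat, then the bidual A** (equipped with the first Arens product) is left φ̃-biflat. -/

import Mathlib

/-!
We realize the bidual `(B ⊗_p B)**` of the projective tensor product of a Banach algebra `B`
with itself canonically as the dual of the Banach space `B →L[ℂ] B* ` of bounded bilinear
forms on `B` (the latter being isometrically isomorphic to `(B ⊗_p B)*`).  All the canonical
Banach `B`-bimodule actions are spelled out explicitly through this identification.
The multiplication of the Banach algebra `B` is encoded as a bounded bilinear map
`μ : B →L[ℂ] B →L[ℂ] B` (for a Banach algebra `A`, `μ = ContinuousLinearMap.mul ℂ A`).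
-/

noncomputable section

/-- The topological dual of a normed space (removed from Mathlib; restored with its old meaning). -/
abbrev NormedSpace.Dual (𝕜 : Type*) [NontriviallyNormedField 𝕜] (E : Type*)
    [SeminormedAddCommGroup E] [NormedSpace 𝕜 E] : Type _ :=
  E →L[𝕜] 𝕜

open ContinuousLinearMap NormedSpace

/-- Shortcut instances for spaces of bounded `ℂ`-linear maps (needed for nested spaces of operators). -/
instance instSeminormedAddCommGroupCLMComplex {E F : Type*} [SeminormedAddCommGroup E] [NormedSpace ℂ E]
    [SeminormedAddCommGroup F] [NormedSpace ℂ F] : SeminormedAddCommGroup (E →L[ℂ] F) :=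
  inferInstance

instance instNormedSpaceCLMComplex {E F : Type*} [SeminormedAddCommGroup E] [NormedSpace ℂ E]
    [SeminormedAddCommGroup F] [NormedSpace ℂ F] : NormedSpace ℂ (E →L[ℂ] F) :=
  inferInstance


/-- The space of bounded bilinear forms on `B`, canonically the dual of the projective
tensor product `B ⊗_p B`. -/
abbrev BilForm (B : Type*) [NormedAddCommGroup B] [NormedSpace ℂ B] : Type _ :=
  B →L[ℂ] Dual ℂ B

/-- The bidual of the projective tensor product `B ⊗_p B`, realized canonically as the dual of
the Banach space of bounded bilinear forms on `B`. -/
abbrev TensorBidual (B : Type*) [NormedAddCommGroup B] [NormedSpace ℂ B] : Type _ :=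
  Dual ℂ (BilForm B)

/-- The bidual `B**` of a normed space `B`. -/
abbrev Bidual (B : Type*) [NormedAddCommGroup B] [NormedSpace ℂ B] : Type _ :=
  Dual ℂ (Dual ℂ B)

variable {B : Type*} [NormedAddCommGroup B] [NormedSpace ℂ B]

/-- The left action of `a ∈ B` (with multiplication `μ`) on `(B ⊗_p B)**`:
`(a • T) β = T ((x, y) ↦ β (a x, y))`, the canonical bidual extension of the
`B`-bimodule action `a • (x ⊗ y) = (a x) ⊗ y` on `B ⊗_p B`. -/
def tensorLSmul (μ : B →L[ℂ] B →L[ℂ] B) (a : B) (T : TensorBidual B) : TensorBidual B :=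
  T.comp ((compL ℂ B B (Dual ℂ B)).flip (μ a))

/-- The right action of `a ∈ B` on `(B ⊗_p B)**`:
`(T • a) β = T ((x, y) ↦ β (x, y a))`, the canonical bidual extension of the
`B`-bimodule action `(x ⊗ y) • a = x ⊗ (y a)` on `B ⊗_p B`. -/
def tensorRSmul (μ : B →L[ℂ] B →L[ℂ] B) (T : TensorBidual B) (a : B) : TensorBidual B :=
  T.comp (compL ℂ B (Dual ℂ B) (Dual ℂ B) ((compL ℂ B B ℂ).flip (μ.flip a)))

/-- `π_B^* ψ`, the image of a functional `ψ ∈ B*` under the adjoint of the product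
morphism `π_B : B ⊗_p B → B`; as a bilinear form it is `(x, y) ↦ ψ (x y)`.  Thus
`π_B** T ψ = T (piDual μ ψ)` for `T ∈ (B ⊗_p B)**`. -/
def piDual (μ : B →L[ℂ] B →L[ℂ] B) (ψ : Dual ℂ B) : BilForm B :=
  (compL ℂ B B ℂ ψ).comp μ

/-- The left action of `a ∈ B` on the bidual `B**`: `(a • m) f = m (f ∘ (a * ·))`. -/
def bidualLSmul (μ : B →L[ℂ] B →L[ℂ] B) (a : B) (m : Bidual B) : Bidual B :=
  m.comp ((compL ℂ B B ℂ).flip (μ a))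

/-- A Banach algebra `B` (with multiplication `μ` and a multiplicative functional `ψ`) is
*left `ψ`-biflat* if there is a bounded linear map `ρ : B → (B ⊗_p B)**` with
`ρ (a b) = ψ (b) ρ (a) = a • ρ (b)` for all `a, b ∈ B`, and `ψ̃ ∘ π_B** ∘ ρ = ψ`
(note `(ψ̃ ∘ π_B**) T = T (piDual μ ψ)`). -/
def IsLeftBiflat (μ : B →L[ℂ] B →L[ℂ] B) (ψ : Dual ℂ B) : Prop :=
  ∃ ρ : B →L[ℂ] TensorBidual B,
    (∀ a b : B, ρ (μ a b) = ψ b • ρ a ∧ ρ (μ a b) = tensorLSmul μ a (ρ b)) ∧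
    ∀ a : B, ρ a (piDual μ ψ) = ψ a

/-- A Banach algebra `B` is *left `ψ`-amenable* if there is `m ∈ B**` with
`a • m = ψ (a) m` for all `a ∈ B` and `ψ̃ (m) = m (ψ) = 1`. -/
def IsLeftAmenable (μ : B →L[ℂ] B →L[ℂ] B) (ψ : Dual ℂ B) : Prop :=
  ∃ m : Bidual B, (∀ (a : B) (f : Dual ℂ B), m (f.comp (μ a)) = ψ a * m f) ∧ m ψ = 1

/-- Auxiliary map for the first Arens product: `arensAux μ f a = f · a`, where
`(f · a) (b) = f (a b)`. -/
def arensAux (μ : B →L[ℂ] B →L[ℂ] B) : Dual ℂ B →L[ℂ] (B →L[ℂ] Dual ℂ B) :=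
  ((compL ℂ B (B →L[ℂ] B) (Dual ℂ B)).flip μ).comp (compL ℂ B B ℂ)

/-- Second auxiliary map for the first Arens product: `arensAux₂ μ n f = n · f`, where
`(n · f) (a) = n (f · a)`. -/
def arensAux₂ (μ : B →L[ℂ] B →L[ℂ] B) : Bidual B →L[ℂ] (Dual ℂ B →L[ℂ] Dual ℂ B) :=
  ((compL ℂ (Dual ℂ B) (B →L[ℂ] Dual ℂ B) (Dual ℂ B)).flip (arensAux μ)).comp
    (compL ℂ B (Dual ℂ B) ℂ)

/-- The *first Arens product* on the bidual `B**` of a Banach algebra `B` with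
multiplication `μ`: `(m □ n) (f) = m (n · f)`, where `(n · f) (a) = n (f · a)` and
`(f · a) (b) = f (a b)`. -/
def arens (μ : B →L[ℂ] B →L[ℂ] B) : Bidual B →L[ℂ] Bidual B →L[ℂ] Bidual B :=
  ((compL ℂ (Bidual B) (Dual ℂ B →L[ℂ] Dual ℂ B) (Bidual B)).flip (arensAux₂ μ)).comp
    (compL ℂ (Dual ℂ B) (Dual ℂ B) ℂ)

/-- `ψ̃`, the canonical extension of a functional `ψ ∈ B*` to a functional on `B**`
(given by `ψ̃ (m) = m (ψ)`); if `ψ` is a character of `B`, this is the unique extension of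
`ψ` to a character of `B**` with the first Arens product. -/
def charExt (ψ : Dual ℂ B) : Dual ℂ (Bidual B) :=
  ContinuousLinearMap.apply ℂ ℂ ψ

/-!
Using the left approximate identity, a left `φ`-biflat splitting `ρ` satisfies
`ρ a = φ a • ρ a₀` for any `a₀` with `φ a₀ = 1`, so `m₀ := π_A** (ρ a₀) ∈ A**` is a left
`φ`-mean: `A` is left `φ`-amenable. In `A**` this mean satisfies `m □ m₀ = φ̃ m • m₀`, and then
`m ↦ φ̃ m • (m₀ ⊗ m₀)` is a left `φ̃`-biflat splitting.
-/

open Filter Topology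

section Bilinear

variable (μ : B →L[ℂ] B →L[ℂ] B)

@[simp]
lemma tensorLSmul_apply (a : B) (T : TensorBidual B) (β : BilForm B) :
    tensorLSmul μ a T β = T (β.comp (μ a)) :=
  rfl

@[simp]
lemma piDual_apply (ψ : Dual ℂ B) (x y : B) : piDual μ ψ x y = ψ (μ x y) :=
  rfl

@[simp]
lemma arens_apply (m n : Bidual B) (f : Dual ℂ B) :
    arens μ m n f = m (arensAux₂ μ n f) :=
  rfl

@[simp]
lemma arensAux₂_apply (n : Bidual B) (f : Dual ℂ B) (x : B) :
    arensAux₂ μ n f x = n (f.comp (μ x)) :=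
  rfl

@[simp]
lemma charExt_apply (ψ : Dual ℂ B) (m : Bidual B) : charExt ψ m = m ψ :=
  rfl

theorem isLeftBiflat_of_mul_eq_smul {ψ : Dual ℂ B} (hψ : ∀ a b, ψ (μ a b) = ψ a * ψ b)
    (m₀ : B) (hm₀ : ∀ a, μ a m₀ = ψ a • m₀) (hψm₀ : ψ m₀ = 1) : IsLeftBiflat μ ψ := by
  set D : TensorBidual B := (apply ℂ ℂ m₀).comp (apply ℂ (Dual ℂ B) m₀)
  have hD : ∀ a, tensorLSmul μ a D = ψ a • D := fun a ↦ by
    ext β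
    simp [D, hm₀]
  refine ⟨ψ.smulRight D, fun a b ↦ ⟨?_, ?_⟩, fun a ↦ ?_⟩
  · rw [smulRight_apply, smulRight_apply, hψ, mul_comm, mul_smul]
  · have : tensorLSmul μ a (ψ b • D) = ψ b • tensorLSmul μ a D := rfl
    rw [smulRight_apply, smulRight_apply, hψ, this, hD, smul_smul, mul_comm]
  · simp [D, hm₀, hψm₀]

theorem charExt_arens {φ : Dual ℂ B} (hφ : ∀ a b, φ (μ a b) = φ a * φ b) (m n : Bidual B) :
    charExt φ (arens μ m n) = charExt φ m * charExt φ n := by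
  have : arensAux₂ μ n φ = n φ • φ := by
    ext x
    have : φ.comp (μ x) = φ x • φ := by ext y; simp [hφ]
    simp [this, mul_comm]
  simp [this, mul_comm]

theorem arens_eq_charExt_smul {φ : Dual ℂ B} {m₀ : Bidual B}
    (hm₀ : ∀ (a : B) (f : Dual ℂ B), m₀ (f.comp (μ a)) = φ a * m₀ f) (m : Bidual B) :
    arens μ m m₀ = charExt φ m • m₀ := by
  ext f
  have : arensAux₂ μ m₀ f = m₀ f • φ := by
    ext x
    simp [hm₀, mul_comm]
  simp [this, mul_comm]

theorem IsLeftAmenable.isLeftBiflat_arens {φ : Dual ℂ B} (hφ : ∀ a b, φ (μ a b) = φ a * φ b)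
    (h : IsLeftAmenable μ φ) : IsLeftBiflat (B := Bidual B) (arens μ) (charExt φ) := by
  obtain ⟨m₀, hm₀, hφm₀⟩ := h
  exact isLeftBiflat_of_mul_eq_smul _ (charExt_arens μ hφ) m₀
    (arens_eq_charExt_smul μ hm₀) hφm₀

end Bilinear

theorem eq_smul_of_tendsto_mul {A 𝕜 F : Type*} [Mul A] [TopologicalSpace A] [Monoid 𝕜]
    [MulAction 𝕜 F] [TopologicalSpace F] [T2Space F] [ContinuousConstSMul 𝕜 F]
    {φ : A → 𝕜} {ρ : A → F}
    (hρ : Continuous ρ) (hρ_mul : ∀ e a, ρ (e * a) = φ a • ρ e) {l : Filter A} [l.NeBot]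
    (hl : ∀ a, Tendsto (· * a) l (𝓝 a)) {a₀ : A} (hφa₀ : φ a₀ = 1) (a : A) :
    ρ a = φ a • ρ a₀ := by
  have hlim : Tendsto ρ l (𝓝 (ρ a₀)) :=
    ((hρ.tendsto a₀).comp (hl a₀)).congr fun e ↦ by simp [hρ_mul, hφa₀]
  refine tendsto_nhds_unique ((hρ.tendsto a).comp (hl a)) ?_
  exact (hlim.const_smul (φ a)).congr fun e ↦ (hρ_mul e a).symm

section BanachAlgebra

variable {A : Type*} [NonUnitalNormedRing A] [NormedSpace ℂ A]
  [IsScalarTower ℂ A A] [SMulCommClass ℂ A A]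

lemma piDual_mul_comp (f : Dual ℂ A) (a : A) :
    piDual (mul ℂ A) (f.comp (mul ℂ A a)) = (piDual (mul ℂ A) f).comp (mul ℂ A a) := by
  ext x y
  simp [mul_assoc]

theorem IsLeftBiflat.isLeftAmenable {φ : A →L[ℂ] ℂ} (hφ : φ ≠ 0)
    (hlai : ∃ l : Filter A, l.NeBot ∧ ∀ a : A, Tendsto (fun e ↦ e * a) l (𝓝 a))
    (h : IsLeftBiflat (mul ℂ A) φ) : IsLeftAmenable (mul ℂ A) φ := by
  obtain ⟨l, hl, hlai⟩ := hlai
  obtain ⟨ρ, hρ, hρφ⟩ := h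
  obtain ⟨a₀, hφa₀⟩ : ∃ a₀, φ a₀ = 1 := LinearMap.surjective_of_ne_zero (f := φ.toLinearMap)
    (by rwa [Ne, ← toLinearMap_zero, coe_inj]) 1
  have hρa : ∀ a, ρ a = φ a • ρ a₀ :=
    eq_smul_of_tendsto_mul ρ.continuous (fun e a ↦ (hρ e a).1) hlai hφa₀
  have hact : ∀ a, tensorLSmul (mul ℂ A) a (ρ a₀) = φ a • ρ a₀ := fun a ↦ by
    rw [← (hρ a a₀).2, (hρ a a₀).1, hφa₀, one_smul, hρa]
  refine ⟨(ρ a₀).comp (arensAux (mul ℂ A)), fun a f ↦ ?_, ?_⟩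
  · change ρ a₀ (piDual _ (f.comp _)) = φ a * ρ a₀ (piDual _ f)
    rw [piDual_mul_comp, ← tensorLSmul_apply, hact]
    rfl
  · change ρ a₀ (piDual _ φ) = 1
    rw [hρφ, hφa₀]

end BanachAlgebra

variable {A : Type*} [NonUnitalNormedRing A] [NormedSpace ℂ A]
  [IsScalarTower ℂ A A] [SMulCommClass ℂ A A] [CompleteSpace A]

/-- half of Theorem 2.2: if a Banach algebra `A` has a left approximate
identity (a net `(e_α)` with `e_α a → a` in norm for every `a ∈ A`, encoded by a filter)
and `A` is left `φ`-biflat, then the bidual `A**`, equipped with the first Arens product,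
is left `φ̃`-biflat. -/
theorem bidual_left_phi_biflat_of_left_phi_biflat
    (φ : A →L[ℂ] ℂ) (hφ_ne : φ ≠ 0)
    (hφ_mul : ∀ a b : A, φ (a * b) = φ a * φ b)
    (hlai : ∃ l : Filter A, l.NeBot ∧ ∀ a : A, Filter.Tendsto (fun e => e * a) l (nhds a))
    (hbf : IsLeftBiflat (ContinuousLinearMap.mul ℂ A) φ) :
    IsLeftBiflat (B := Bidual A) (arens (ContinuousLinearMap.mul ℂ A)) (charExt φ) :=
  (hbf.isLeftAmenable hφ_ne hlai).isLeftBiflat_arens _ hφ_mul
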